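/- The group of all linear isometric equivalences A of V (where V = E × E with the ℓ²-product inner product, E = ℝ³ euclidean 3-space) satisfying A(T) = T, where T = {(x, y) : ‖x‖ = 1 and ‖y‖ = 1} is S² × S², is isomorphic to the semidirect product (O(3) × O(3)) ⋊ ℤ/2, where the nontrivial element of ℤ/2 acts on O(3) × O(3) by exchanging the two factors. -/

import Mathlib

/-- Euclidean 3-space. -/
noncomputable abbrev Euc3 : Type := EuclideanSpace ℝ (Fin 3)

/-- `ℝ³ × ℝ³` with the ℓ²-product inner product. -/
noncomputable abbrev Euc3Prod : Type := WithLp 2 (Euc3 × Euc3)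

/-- `S² × S² ⊂ ℝ³ × ℝ³`: the set of pairs of unit vectors. -/
noncomputable def sphereProd : Set Euc3Prod :=
  {v | ‖(WithLp.equiv 2 (Euc3 × Euc3) v).1‖ = 1 ∧ ‖(WithLp.equiv 2 (Euc3 × Euc3) v).2‖ = 1}

/-- The group of linear isometries of `ℝ³ × ℝ³` carrying `S² × S²` onto itself. -/
noncomputable def sphereProdSymmetries : Subgroup (Euc3Prod ≃ₗᵢ[ℝ] Euc3Prod) where
  carrier := {A | (A : Euc3Prod → Euc3Prod) '' sphereProd = sphereProd}
  one_mem' := by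
    simp [Set.image_id]
  mul_mem' := by
    intro a b ha hb
    show ⇑(a * b) '' sphereProd = sphereProd
    rw [LinearIsometryEquiv.coe_mul, Set.image_comp]
    rw [Set.mem_setOf_eq] at ha hb
    rw [hb, ha]
  inv_mem' := by
    intro a ha
    rw [Set.mem_setOf_eq] at ha ⊢
    conv_lhs => rw [← ha]
    rw [← Set.image_comp]
    simp [Set.image_id']

/-- The 3×3 real orthogonal group `O(3)`. -/
noncomputable abbrev O3 : Type := Matrix.orthogonalGroup (Fin 3) ℝ

open Matrix

lemma toEucLin_mul (A B : Matrix (Fin 3) (Fin 3) ℝ) :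
    toEuclideanLin (A * B) = (toEuclideanLin A).comp (toEuclideanLin B) := by
  ext x
  simp [Matrix.toEuclideanLin_apply, Matrix.mulVec_mulVec]

lemma toEucLin_one : toEuclideanLin (1 : Matrix (Fin 3) (Fin 3) ℝ) = LinearMap.id := by
  ext x
  simp [Matrix.toEuclideanLin_apply]

/-- The linear isometry equivalence of `Euc3` given by an orthogonal matrix. -/
noncomputable def matToIso (U : O3) : Euc3 ≃ₗᵢ[ℝ] Euc3 :=
  LinearEquiv.isometryOfInner
    (LinearEquiv.ofLinear (toEuclideanLin U.1) (toEuclideanLin (star U.1))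
      (by rw [← toEucLin_mul, (show U.1 * star U.1 = 1 from (Matrix.mem_unitaryGroup_iff.mp U.2)), toEucLin_one])
      (by rw [← toEucLin_mul, (show star U.1 * U.1 = 1 from (Matrix.mem_unitaryGroup_iff'.mp U.2)), toEucLin_one]))
    (by
      intro x y
      calc inner ℝ (toEuclideanLin U.1 x) (toEuclideanLin U.1 y)
          = inner ℝ x (LinearMap.adjoint (toEuclideanLin U.1) (toEuclideanLin U.1 y)) := by
            rw [LinearMap.adjoint_inner_right]
        _ = inner ℝ x ((toEuclideanLin (star U.1)).comp (toEuclideanLin U.1) y) := by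
            rw [show (star U.1 : Matrix (Fin 3) (Fin 3) ℝ) = (U.1)ᴴ from rfl,
              Matrix.toEuclideanLin_conjTranspose_eq_adjoint]; rfl
        _ = inner ℝ x y := by
            rw [← toEucLin_mul, (show star U.1 * U.1 = 1 from (Matrix.mem_unitaryGroup_iff'.mp U.2)), toEucLin_one]; rfl)

@[simp] lemma matToIso_apply (U : O3) (x : Euc3) : matToIso U x = toEuclideanLin U.1 x := rfl

noncomputable def matIso : O3 →* (Euc3 ≃ₗᵢ[ℝ] Euc3) where
  toFun := matToIso
  map_one' := by
    apply LinearIsometryEquiv.ext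
    intro x
    show toEuclideanLin (1 : Matrix (Fin 3) (Fin 3) ℝ) x = x
    rw [toEucLin_one]; rfl
  map_mul' U V := by
    apply LinearIsometryEquiv.ext
    intro x
    show toEuclideanLin (U.1 * V.1) x = _
    rw [toEucLin_mul]
    rfl

lemma matIso_injective : Function.Injective matIso := by
  intro U V h
  have h2 : toEuclideanLin U.1 = toEuclideanLin V.1 := by
    ext1 x
    exact LinearIsometryEquiv.ext_iff.mp h x
  exact Subtype.ext (Matrix.toEuclideanLin.injective h2)

lemma matIso_surjective : Function.Surjective matIso := by
  intro f
  set M : Matrix (Fin 3) (Fin 3) ℝ := Matrix.toEuclideanLin.symm (f : Euc3 →ₗ[ℝ] Euc3) with hM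
  have hMf : toEuclideanLin M = (f : Euc3 →ₗ[ℝ] Euc3) := Matrix.toEuclideanLin.apply_symm_apply _
  have hadj : LinearMap.adjoint (f : Euc3 →ₗ[ℝ] Euc3) = (f.symm : Euc3 →ₗ[ℝ] Euc3) := by
    symm
    rw [LinearMap.eq_adjoint_iff]
    intro x y
    calc inner ℝ (f.symm x) y = inner ℝ (f (f.symm x)) (f y) := (f.inner_map_map _ _).symm
      _ = inner ℝ x (f y) := by rw [f.apply_symm_apply]
  have hmem : M ∈ Matrix.unitaryGroup (Fin 3) ℝ := by
    rw [Matrix.mem_unitaryGroup_iff']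
    apply Matrix.toEuclideanLin.injective
    rw [toEucLin_mul, toEucLin_one, hMf,
      show (star M : Matrix (Fin 3) (Fin 3) ℝ) = Mᴴ from rfl,
      Matrix.toEuclideanLin_conjTranspose_eq_adjoint, hMf, hadj]
    ext1 x
    exact f.symm_apply_apply x
  refine ⟨⟨M, hmem⟩, ?_⟩
  apply LinearIsometryEquiv.ext
  intro x
  show toEuclideanLin M x = f x
  rw [hMf]; rfl




/-- pair constructor -/
noncomputable def P (x y : Euc3) : Euc3Prod := (WithLp.equiv 2 (Euc3 × Euc3)).symm (x, y)

@[simp] lemma P_fst (x y : Euc3) : (P x y).fst = x := rfl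
@[simp] lemma P_snd (x y : Euc3) : (P x y).snd = y := rfl
lemma P_eta (v : Euc3Prod) : P v.fst v.snd = v := rfl
lemma P_add (x x' y y' : Euc3) : P (x + x') (y + y') = P x y + P x' y' := rfl
lemma P_smul (c : ℝ) (x y : Euc3) : P (c • x) (c • y) = c • P x y := rfl
lemma P_neg (x y : Euc3) : P (-x) (-y) = - P x y := rfl

lemma mem_sphereProd {v : Euc3Prod} : v ∈ sphereProd ↔ ‖v.fst‖ = 1 ∧ ‖v.snd‖ = 1 := Iff.rfl

lemma norm_sq_prod (v : Euc3Prod) : ‖v‖ ^ 2 = ‖v.fst‖ ^ 2 + ‖v.snd‖ ^ 2 :=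
  WithLp.prod_norm_sq_eq_of_L2 v

/-- block isometry -/
noncomputable def prodIso (f g : Euc3 ≃ₗᵢ[ℝ] Euc3) : Euc3Prod ≃ₗᵢ[ℝ] Euc3Prod :=
  LinearEquiv.isometryOfInner
    (((WithLp.linearEquiv 2 ℝ (Euc3 × Euc3)).trans
        (f.toLinearEquiv.prodCongr g.toLinearEquiv)).trans
      (WithLp.linearEquiv 2 ℝ (Euc3 × Euc3)).symm)
    (by
      intro v w
      show (inner ℝ (P (f v.fst) (g v.snd)) (P (f w.fst) (g w.snd)) : ℝ) = _
      rw [WithLp.prod_inner_apply, WithLp.prod_inner_apply]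
      change inner ℝ (f v.fst) (f w.fst) + inner ℝ (g v.snd) (g w.snd) = inner ℝ v.fst w.fst + inner ℝ v.snd w.snd
      rw [f.inner_map_map, g.inner_map_map])

@[simp] lemma prodIso_apply (f g : Euc3 ≃ₗᵢ[ℝ] Euc3) (v : Euc3Prod) :
    prodIso f g v = P (f v.fst) (g v.snd) := rfl

/-- the coordinate switch -/
noncomputable def swapIso : Euc3Prod ≃ₗᵢ[ℝ] Euc3Prod :=
  LinearEquiv.isometryOfInner
    (((WithLp.linearEquiv 2 ℝ (Euc3 × Euc3)).trans
        (LinearEquiv.prodComm ℝ Euc3 Euc3)).trans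
      (WithLp.linearEquiv 2 ℝ (Euc3 × Euc3)).symm)
    (by
      intro v w
      show (inner ℝ (P v.snd v.fst) (P w.snd w.fst) : ℝ) = _
      rw [WithLp.prod_inner_apply, WithLp.prod_inner_apply]
      change inner ℝ v.snd w.snd + inner ℝ v.fst w.fst = inner ℝ v.fst w.fst + inner ℝ v.snd w.snd
      ring)

@[simp] lemma swapIso_apply (v : Euc3Prod) : swapIso v = P v.snd v.fst := rfl

lemma swapIso_symm : swapIso.symm = swapIso := rfl

lemma swapIso_sq : swapIso * swapIso = 1 := by
  apply LinearIsometryEquiv.ext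
  intro v
  rfl

/-- homomorphism from ℤ/2 sending the generator to an element of order dividing 2. -/
def orderTwoHom {G : Type*} [Group G] (σ : G) (h : σ * σ = 1) :
    Multiplicative (ZMod 2) →* G where
  toFun g := if (Multiplicative.toAdd g : ZMod 2) = 0 then 1 else σ
  map_one' := if_pos rfl
  map_mul' a b := by
    have hcases : ∀ x : ZMod 2, x = 0 ∨ x = 1 := by decide
    have hadd : (Multiplicative.toAdd (a * b) : ZMod 2)
        = Multiplicative.toAdd a + Multiplicative.toAdd b := rfl
    rcases hcases (Multiplicative.toAdd a) with ha | ha <;>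
      rcases hcases (Multiplicative.toAdd b) with hb | hb <;>
      simp [hadd, ha, hb, h, show (1 + 1 : ZMod 2) = 0 by decide]
lemma orderTwoHom_one {G : Type*} [Group G] (σ : G) (h : σ * σ = 1) :
    orderTwoHom σ h (Multiplicative.ofAdd (1 : ZMod 2)) = σ := by
  simp [orderTwoHom]


lemma mem_symmetries {A : Euc3Prod ≃ₗᵢ[ℝ] Euc3Prod} :
    A ∈ sphereProdSymmetries ↔ ⇑A '' sphereProd = sphereProd := Iff.rfl

lemma mem_symmetries_of (A : Euc3Prod ≃ₗᵢ[ℝ] Euc3Prod)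
    (h : ∀ v ∈ sphereProd, A v ∈ sphereProd)
    (h' : ∀ v ∈ sphereProd, A.symm v ∈ sphereProd) : A ∈ sphereProdSymmetries := by
  rw [mem_symmetries]
  apply Set.Subset.antisymm
  · rintro _ ⟨v, hv, rfl⟩
    exact h v hv
  · intro v hv
    exact ⟨A.symm v, h' v hv, A.apply_symm_apply v⟩

lemma prodIso_symm (f g : Euc3 ≃ₗᵢ[ℝ] Euc3) :
    (prodIso f g).symm = prodIso f.symm g.symm := rfl

lemma prodIso_mem (f g : Euc3 ≃ₗᵢ[ℝ] Euc3) : prodIso f g ∈ sphereProdSymmetries := by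
  apply mem_symmetries_of
  · rintro v ⟨h1, h2⟩
    exact ⟨by simpa using h1, by simpa using h2⟩
  · rintro v ⟨h1, h2⟩
    rw [prodIso_symm]
    exact ⟨by simpa using h1, by simpa using h2⟩

lemma swapIso_mem : swapIso ∈ sphereProdSymmetries := by
  apply mem_symmetries_of
  · rintro v ⟨h1, h2⟩
    exact ⟨h2, h1⟩
  · rintro v ⟨h1, h2⟩
    rw [swapIso_symm]
    exact ⟨h2, h1⟩

/-- the block homomorphism into the symmetry group -/
noncomputable def f₁ : O3 × O3 →* sphereProdSymmetries := by
  refine MonoidHom.codRestrict ?_ _ ?_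
  · exact {
      toFun := fun p => prodIso (matIso p.1) (matIso p.2)
      map_one' := by
        apply LinearIsometryEquiv.ext
        intro v
        show P ((matIso 1) v.fst) ((matIso 1) v.snd) = v
        rw [matIso.map_one]
        rfl
      map_mul' := fun p q => by
        apply LinearIsometryEquiv.ext
        intro v
        show P ((matIso (p.1 * q.1)) v.fst) ((matIso (p.2 * q.2)) v.snd) = _
        rw [matIso.map_mul, matIso.map_mul]
        rfl }
  · intro p
    exact prodIso_mem _ _

lemma f₁_coe (p : O3 × O3) : (f₁ p : Euc3Prod ≃ₗᵢ[ℝ] Euc3Prod) = prodIso (matIso p.1) (matIso p.2) := rfl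

noncomputable def σ' : sphereProdSymmetries := ⟨swapIso, swapIso_mem⟩

lemma σ'_sq : σ' * σ' = 1 := Subtype.ext swapIso_sq

noncomputable def f₂ : Multiplicative (ZMod 2) →* sphereProdSymmetries :=
  orderTwoHom σ' σ'_sq

/-- the swap action on `O3 × O3` -/
def swAut : MulAut (O3 × O3) := MulEquiv.prodComm

lemma swAut_sq : swAut * swAut = 1 := by
  apply MulEquiv.ext
  intro p
  rfl

noncomputable def φ : Multiplicative (ZMod 2) →* MulAut (O3 × O3) :=
  orderTwoHom swAut swAut_sq

lemma φ_one (p : O3 × O3) : φ (Multiplicative.ofAdd (1 : ZMod 2)) p = (p.2, p.1) := by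
  rw [φ, orderTwoHom_one]
  rfl

lemma mult_cases (g : Multiplicative (ZMod 2)) :
    g = 1 ∨ g = Multiplicative.ofAdd 1 := by
  have : ∀ x : ZMod 2, x = 0 ∨ x = 1 := by decide
  rcases this (Multiplicative.toAdd g) with h | h
  · left
    have := congrArg Multiplicative.ofAdd h
    simpa using this
  · right
    have := congrArg Multiplicative.ofAdd h
    simpa using this

lemma compat : ∀ g, f₁.comp (φ g).toMonoidHom = (MulAut.conj (f₂ g)).toMonoidHom.comp f₁ := by
  intro g
  rcases mult_cases g with rfl | rfl
  · simp only [_root_.map_one]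
    ext p : 1
    simp
  · rw [φ, orderTwoHom_one, f₂, orderTwoHom_one]
    ext p : 1
    apply Subtype.ext
    apply LinearIsometryEquiv.ext
    intro v
    show prodIso (matIso p.2) (matIso p.1) v
      = ((σ' * f₁ p * σ'⁻¹ : sphereProdSymmetries) : Euc3Prod ≃ₗᵢ[ℝ] Euc3Prod) v
    have hinv : (σ'⁻¹ : sphereProdSymmetries) = σ' := by
      rw [eq_comm, eq_inv_iff_mul_eq_one, σ'_sq]
    rw [hinv]
    rfl

noncomputable def Ψ : (O3 × O3) ⋊[φ] Multiplicative (ZMod 2) →* sphereProdSymmetries :=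
  SemidirectProduct.lift f₁ f₂ compat

lemma Ψ_apply (a : (O3 × O3) ⋊[φ] Multiplicative (ZMod 2)) :
    Ψ a = f₁ a.left * f₂ a.right := rfl
-- continuation, appended to main.lean for testing
section Classify

lemma norm_eq_of_sq {a b : ℝ} (ha : 0 ≤ a) (hb : 0 ≤ b) (h : a ^ 2 = b ^ 2) : a = b := by
  rw [← Real.sqrt_sq ha, ← Real.sqrt_sq hb, h]

lemma map_eq_zero_of_unit {L : Euc3 →ₗ[ℝ] Euc3} (h : ∀ y : Euc3, ‖y‖ = 1 → L y = 0) :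
    ∀ y, L y = 0 := by
  intro y
  rcases eq_or_ne y 0 with rfl | hy
  · simp
  · have hn : (‖y‖ : ℝ) ≠ 0 := norm_ne_zero_iff.mpr hy
    have hu : ‖(‖y‖⁻¹ • y : Euc3)‖ = 1 := by
      rw [norm_smul, norm_inv, norm_norm, inv_mul_cancel₀ hn]
    have hy' : L y = ‖y‖ • L (‖y‖⁻¹ • y) := by
      rw [L.map_smul, smul_smul, mul_inv_cancel₀ hn, one_smul]
    rw [hy', h _ hu, smul_zero]

lemma norm_map_of_unit {L : Euc3 →ₗ[ℝ] Euc3} (h : ∀ y : Euc3, ‖y‖ = 1 → ‖L y‖ = 1) :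
    ∀ y, ‖L y‖ = ‖y‖ := by
  intro y
  rcases eq_or_ne y 0 with rfl | hy
  · simp
  · have hn : (‖y‖ : ℝ) ≠ 0 := norm_ne_zero_iff.mpr hy
    have hu : ‖(‖y‖⁻¹ • y : Euc3)‖ = 1 := by
      rw [norm_smul, norm_inv, norm_norm, inv_mul_cancel₀ hn]
    have hy' : L y = ‖y‖ • L (‖y‖⁻¹ • y) := by
      rw [L.map_smul, smul_smul, mul_inv_cancel₀ hn, one_smul]
    rw [hy', norm_smul, h _ hu, norm_norm, mul_one]

/-- a linear self-map of `Euc3` preserving norms is a linear isometry equivalence -/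
noncomputable def isoOfNorm (L : Euc3 →ₗ[ℝ] Euc3) (h : ∀ x, ‖L x‖ = ‖x‖) :
    Euc3 ≃ₗᵢ[ℝ] Euc3 :=
  have hinj : Function.Injective L := by
    intro x y hxy
    have : ‖L (x - y)‖ = 0 := by rw [map_sub, hxy, sub_self, norm_zero]
    rw [h] at this
    exact sub_eq_zero.mp (norm_eq_zero.mp this)
  { toLinearEquiv := LinearEquiv.ofBijective L
      ⟨hinj, (LinearMap.injective_iff_surjective).mp hinj⟩,
    norm_map' := h }

@[simp] lemma isoOfNorm_apply (L : Euc3 →ₗ[ℝ] Euc3) (h : ∀ x, ‖L x‖ = ‖x‖) (x : Euc3) :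
    isoOfNorm L h x = L x := rfl

variable (A : Euc3Prod ≃ₗᵢ[ℝ] Euc3Prod)

/-- component maps of `A` -/
noncomputable def cB : Euc3 →ₗ[ℝ] Euc3 :=
  (LinearMap.fst ℝ Euc3 Euc3).comp ((WithLp.linearEquiv 2 ℝ (Euc3 × Euc3)).toLinearMap.comp
    ((A.toLinearEquiv.toLinearMap).comp
      (((WithLp.linearEquiv 2 ℝ (Euc3 × Euc3)).symm.toLinearMap).comp (LinearMap.inl ℝ Euc3 Euc3))))

noncomputable def cC : Euc3 →ₗ[ℝ] Euc3 :=
  (LinearMap.snd ℝ Euc3 Euc3).comp ((WithLp.linearEquiv 2 ℝ (Euc3 × Euc3)).toLinearMap.comp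
    ((A.toLinearEquiv.toLinearMap).comp
      (((WithLp.linearEquiv 2 ℝ (Euc3 × Euc3)).symm.toLinearMap).comp (LinearMap.inl ℝ Euc3 Euc3))))

noncomputable def cD : Euc3 →ₗ[ℝ] Euc3 :=
  (LinearMap.fst ℝ Euc3 Euc3).comp ((WithLp.linearEquiv 2 ℝ (Euc3 × Euc3)).toLinearMap.comp
    ((A.toLinearEquiv.toLinearMap).comp
      (((WithLp.linearEquiv 2 ℝ (Euc3 × Euc3)).symm.toLinearMap).comp (LinearMap.inr ℝ Euc3 Euc3))))

noncomputable def cE : Euc3 →ₗ[ℝ] Euc3 :=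
  (LinearMap.snd ℝ Euc3 Euc3).comp ((WithLp.linearEquiv 2 ℝ (Euc3 × Euc3)).toLinearMap.comp
    ((A.toLinearEquiv.toLinearMap).comp
      (((WithLp.linearEquiv 2 ℝ (Euc3 × Euc3)).symm.toLinearMap).comp (LinearMap.inr ℝ Euc3 Euc3))))

lemma cB_apply (x : Euc3) : cB A x = (A (P x 0)).fst := rfl
lemma cC_apply (x : Euc3) : cC A x = (A (P x 0)).snd := rfl
lemma cD_apply (y : Euc3) : cD A y = (A (P 0 y)).fst := rfl
lemma cE_apply (y : Euc3) : cE A y = (A (P 0 y)).snd := rfl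

lemma A_decomp (x y : Euc3) : A (P x y) = P (cB A x + cD A y) (cC A x + cE A y) := by
  have h1 : P x y = P x 0 + P 0 y := by rw [← P_add, add_zero, zero_add]
  have h2 : A (P x y) = A (P x 0) + A (P 0 y) := by rw [h1, map_add]
  rw [h2, ← P_eta (A (P x 0) + A (P 0 y))]
  rfl

end Classify
section Main

lemma classify (A : Euc3Prod ≃ₗᵢ[ℝ] Euc3Prod) (hA : ∀ v ∈ sphereProd, A v ∈ sphereProd) :
    (∃ f g : Euc3 ≃ₗᵢ[ℝ] Euc3, A = prodIso f g) ∨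
    (∃ f g : Euc3 ≃ₗᵢ[ℝ] Euc3, A = prodIso f g * swapIso) := by
  -- basic consequences
  have hA1 : ∀ x y : Euc3, ‖x‖ = 1 → ‖y‖ = 1 →
      ‖(A (P x y)).fst‖ = 1 ∧ ‖(A (P x y)).snd‖ = 1 := by
    intro x y hx hy
    exact hA (P x y) ⟨hx, hy⟩
  -- step lemma
  have step : ∀ x y : Euc3, ‖x‖ = 1 → ‖y‖ = 1 →
      (‖cB A x‖ ^ 2 + ‖cD A y‖ ^ 2 = 1 ∧ ‖cC A x‖ ^ 2 + ‖cE A y‖ ^ 2 = 1) ∧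
      ((inner ℝ (cB A x) (cD A y) : ℝ) = 0) ∧
      (‖cB A x‖ ^ 2 + ‖cC A x‖ ^ 2 = 1 ∧ ‖cD A y‖ ^ 2 + ‖cE A y‖ ^ 2 = 1) := by
    intro x y hx hy
    have hplus := hA1 x y hx hy
    have hminus := hA1 x (-y) hx (by rw [norm_neg]; exact hy)
    rw [A_decomp] at hplus hminus
    have hDneg : cD A (-y) = - cD A y := by rw [map_neg]
    have hEneg : cE A (-y) = - cE A y := by rw [map_neg]
    rw [hDneg, hEneg] at hminus
    simp only [P_fst, P_snd] at hplus hminus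
    have e1 : ‖cB A x + cD A y‖ ^ 2 = 1 := by rw [hplus.1]; norm_num
    have e2 : ‖cC A x + cE A y‖ ^ 2 = 1 := by rw [hplus.2]; norm_num
    have e3 : ‖cB A x - cD A y‖ ^ 2 = 1 := by
      rw [sub_eq_add_neg, hminus.1]; norm_num
    have e4 : ‖cC A x - cE A y‖ ^ 2 = 1 := by
      rw [sub_eq_add_neg, hminus.2]; norm_num
    rw [norm_add_sq_real] at e1 e2
    rw [norm_sub_sq_real] at e3 e4
    -- norms of images of basis slices
    have n1 : ‖cB A x‖ ^ 2 + ‖cC A x‖ ^ 2 = 1 := by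
      have := norm_sq_prod (A (P x 0))
      rw [A.norm_map, norm_sq_prod (P x 0)] at this
      simp only [P_fst, P_snd, norm_zero] at this
      rw [A_decomp] at this
      simp only [P_fst, P_snd, map_zero, add_zero] at this
      rw [hx] at this
      linarith
    have n2 : ‖cD A y‖ ^ 2 + ‖cE A y‖ ^ 2 = 1 := by
      have := norm_sq_prod (A (P 0 y))
      rw [A.norm_map, norm_sq_prod (P 0 y)] at this
      simp only [P_fst, P_snd, norm_zero] at this
      rw [A_decomp] at this
      simp only [P_fst, P_snd, map_zero, zero_add] at this
      rw [hy] at this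
      linarith
    refine ⟨⟨by linarith, by linarith⟩, by linarith, n1, n2⟩
  -- the constants
  set x₀ : Euc3 := EuclideanSpace.single (0 : Fin 3) (1 : ℝ) with hx₀def
  have hx₀ : ‖x₀‖ = 1 := by simp [hx₀def]
  set t2 : ℝ := ‖cB A x₀‖ ^ 2 with ht2
  set s2 : ℝ := ‖cC A x₀‖ ^ 2 with hs2
  have hts : t2 + s2 = 1 := ((step x₀ x₀ hx₀ hx₀).2.2).1
  have hD : ∀ y : Euc3, ‖y‖ = 1 → ‖cD A y‖ ^ 2 = s2 := by
    intro y hy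
    have h := step x₀ y hx₀ hy
    have := h.1.1
    linarith
  have hE : ∀ y : Euc3, ‖y‖ = 1 → ‖cE A y‖ ^ 2 = t2 := by
    intro y hy
    have h := step x₀ y hx₀ hy
    have h1 := h.1.2
    have h2 := h.2.2.2
    have h3 := hD y hy
    linarith
  have hB : ∀ x : Euc3, ‖x‖ = 1 → ‖cB A x‖ ^ 2 = t2 := by
    intro x hx
    have h := step x x₀ hx hx₀
    have h1 := h.1.1
    have h2 := hD x₀ hx₀
    linarith
  have hC : ∀ x : Euc3, ‖x‖ = 1 → ‖cC A x‖ ^ 2 = s2 := by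
    intro x hx
    have h := (step x x₀ hx hx₀).2.2.1
    have h1 := hB x hx
    linarith
  have ht2nn : 0 ≤ t2 := sq_nonneg _
  have hs2nn : 0 ≤ s2 := sq_nonneg _
  -- not both nonzero
  have key : s2 = 0 ∨ t2 = 0 := by
    by_contra hcon
    push_neg at hcon
    obtain ⟨hs0, ht0⟩ := hcon
    -- cD is injective, hence surjective
    have hDinj : Function.Injective (cD A) := by
      intro z w hzw
      have hsub : cD A (z - w) = 0 := by rw [map_sub, hzw, sub_self]
      by_contra hne
      have hzw0 : z - w ≠ 0 := sub_ne_zero.mpr (fun h => hne (by rw [h]))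
      have hn : (‖z - w‖ : ℝ) ≠ 0 := norm_ne_zero_iff.mpr hzw0
      have hu : ‖(‖z - w‖⁻¹ • (z - w) : Euc3)‖ = 1 := by
        rw [norm_smul, norm_inv, norm_norm, inv_mul_cancel₀ hn]
      have := hD _ hu
      rw [(cD A).map_smul, hsub, smul_zero, norm_zero] at this
      exact hs0 (by linarith [this])
    have hDsurj : Function.Surjective (cD A) :=
      (LinearMap.injective_iff_surjective).mp hDinj
    -- b := cB A x₀ ≠ 0
    have hbnz : cB A x₀ ≠ 0 := by
      intro h0
      rw [h0, norm_zero] at ht2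
      exact ht0 (by rw [ht2]; norm_num)
    obtain ⟨y, hy⟩ := hDsurj (cB A x₀)
    have hy0 : y ≠ 0 := by
      intro h0
      rw [h0, map_zero] at hy
      exact hbnz hy.symm
    have hn : (‖y‖ : ℝ) ≠ 0 := norm_ne_zero_iff.mpr hy0
    have hu : ‖(‖y‖⁻¹ • y : Euc3)‖ = 1 := by
      rw [norm_smul, norm_inv, norm_norm, inv_mul_cancel₀ hn]
    have horth := (step x₀ (‖y‖⁻¹ • y) hx₀ hu).2.1
    rw [(cD A).map_smul, hy, real_inner_smul_right, real_inner_self_eq_norm_sq] at horth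
    rcases mul_eq_zero.mp horth with h | h
    · exact inv_ne_zero hn h
    · exact hbnz (by
        have := norm_eq_zero.mp (pow_eq_zero_iff (n := 2) (by norm_num) |>.mp h)
        exact this)
  -- conclusion in each case
  rcases key with hs0 | ht0
  · -- block diagonal
    have ht1 : t2 = 1 := by linarith
    have hCzero : ∀ x, cC A x = 0 := by
      apply map_eq_zero_of_unit
      intro x hx
      have := hC x hx
      rw [hs0] at this
      exact norm_eq_zero.mp (pow_eq_zero_iff (n := 2) (by norm_num) |>.mp this)
    have hDzero : ∀ y, cD A y = 0 := by
      apply map_eq_zero_of_unit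
      intro y hy
      have := hD y hy
      rw [hs0] at this
      exact norm_eq_zero.mp (pow_eq_zero_iff (n := 2) (by norm_num) |>.mp this)
    have hBnorm : ∀ x, ‖cB A x‖ = ‖x‖ := by
      apply norm_map_of_unit
      intro x hx
      have := hB x hx
      rw [ht1] at this
      exact norm_eq_of_sq (norm_nonneg _) (by norm_num) (by rw [this]; norm_num)
    have hEnorm : ∀ y, ‖cE A y‖ = ‖y‖ := by
      apply norm_map_of_unit
      intro y hy
      have := hE y hy
      rw [ht1] at this
      exact norm_eq_of_sq (norm_nonneg _) (by norm_num) (by rw [this]; norm_num)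
    left
    refine ⟨isoOfNorm (cB A) hBnorm, isoOfNorm (cE A) hEnorm, ?_⟩
    apply LinearIsometryEquiv.ext
    intro v
    rw [← P_eta v, A_decomp, hCzero, hDzero, add_zero, zero_add]
    rfl
  · -- swap type
    have hs1 : s2 = 1 := by linarith
    have hBzero : ∀ x, cB A x = 0 := by
      apply map_eq_zero_of_unit
      intro x hx
      have := hB x hx
      rw [ht0] at this
      exact norm_eq_zero.mp (pow_eq_zero_iff (n := 2) (by norm_num) |>.mp this)
    have hEzero : ∀ y, cE A y = 0 := by
      apply map_eq_zero_of_unit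
      intro y hy
      have := hE y hy
      rw [ht0] at this
      exact norm_eq_zero.mp (pow_eq_zero_iff (n := 2) (by norm_num) |>.mp this)
    have hDnorm : ∀ y, ‖cD A y‖ = ‖y‖ := by
      apply norm_map_of_unit
      intro y hy
      have := hD y hy
      rw [hs1] at this
      exact norm_eq_of_sq (norm_nonneg _) (by norm_num) (by rw [this]; norm_num)
    have hCnorm : ∀ x, ‖cC A x‖ = ‖x‖ := by
      apply norm_map_of_unit
      intro x hx
      have := hC x hx
      rw [hs1] at this
      exact norm_eq_of_sq (norm_nonneg _) (by norm_num) (by rw [this]; norm_num)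
    right
    refine ⟨isoOfNorm (cD A) hDnorm, isoOfNorm (cC A) hCnorm, ?_⟩
    apply LinearIsometryEquiv.ext
    intro v
    rw [← P_eta v, A_decomp, hBzero, hEzero, zero_add, add_zero]
    rfl

end Main
lemma f₂_one : f₂ (1 : Multiplicative (ZMod 2)) = 1 := map_one f₂

lemma f₂_gen : f₂ (Multiplicative.ofAdd (1 : ZMod 2)) = σ' := orderTwoHom_one _ _

lemma Ψ_injective : Function.Injective Ψ := by
  rw [injective_iff_map_eq_one]
  intro a ha
  have hcoe : ((Ψ a : sphereProdSymmetries) : Euc3Prod ≃ₗᵢ[ℝ] Euc3Prod) = 1 := by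
    rw [ha]; rfl
  rcases mult_cases a.right with hr | hr
  · -- block case
    have hblock : prodIso (matIso a.left.1) (matIso a.left.2) = 1 := by
      have : ((f₁ a.left : sphereProdSymmetries) : Euc3Prod ≃ₗᵢ[ℝ] Euc3Prod)
          * ((f₂ a.right : sphereProdSymmetries) : Euc3Prod ≃ₗᵢ[ℝ] Euc3Prod) = 1 := hcoe
      rw [hr, f₂_one] at this
      simpa [f₁_coe] using this
    have h1 : matIso a.left.1 = 1 := by
      apply LinearIsometryEquiv.ext
      intro x
      have := LinearIsometryEquiv.ext_iff.mp hblock (P x x)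
      have h2 := congrArg (fun w : Euc3Prod => w.fst) this
      simpa using h2
    have h2 : matIso a.left.2 = 1 := by
      apply LinearIsometryEquiv.ext
      intro x
      have := LinearIsometryEquiv.ext_iff.mp hblock (P x x)
      have h2 := congrArg (fun w : Euc3Prod => w.snd) this
      simpa using h2
    have hl : a.left = 1 := by
      have e1 : a.left.1 = 1 := matIso_injective (by rw [h1, matIso.map_one])
      have e2 : a.left.2 = 1 := matIso_injective (by rw [h2, matIso.map_one])
      exact Prod.ext e1 e2
    exact SemidirectProduct.ext hl hr
  · -- swap case: impossible
    exfalso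
    have hco : ((f₁ a.left : sphereProdSymmetries) : Euc3Prod ≃ₗᵢ[ℝ] Euc3Prod)
        * ((f₂ a.right : sphereProdSymmetries) : Euc3Prod ≃ₗᵢ[ℝ] Euc3Prod) = 1 := hcoe
    rw [hr, f₂_gen] at hco
    have := LinearIsometryEquiv.ext_iff.mp hco (P (EuclideanSpace.single (0 : Fin 3) (1 : ℝ)) 0)
    have hl : ((matIso a.left.1) (0 : Euc3) : Euc3)
        = EuclideanSpace.single (0 : Fin 3) (1 : ℝ) :=
      congrArg (fun w : Euc3Prod => w.fst) this
    rw [map_zero] at hl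
    have : ‖(EuclideanSpace.single (0 : Fin 3) (1 : ℝ) : Euc3)‖ = 1 := by simp
    rw [← hl] at this
    simp at this

lemma Ψ_surjective : Function.Surjective Ψ := by
  rintro ⟨A, hAmem⟩
  have hA : ∀ v ∈ sphereProd, A v ∈ sphereProd := by
    intro v hv
    have : A v ∈ ⇑A '' sphereProd := Set.mem_image_of_mem A hv
    rwa [mem_symmetries.mp hAmem] at this
  rcases classify A hA with ⟨f, g, hfg⟩ | ⟨f, g, hfg⟩
  · obtain ⟨U, hU⟩ := matIso_surjective f
    obtain ⟨V, hV⟩ := matIso_surjective g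
    refine ⟨⟨(U, V), 1⟩, ?_⟩
    apply Subtype.ext
    show ((f₁ ((U, V) : O3 × O3) : sphereProdSymmetries) : Euc3Prod ≃ₗᵢ[ℝ] Euc3Prod)
        * ((f₂ 1 : sphereProdSymmetries) : Euc3Prod ≃ₗᵢ[ℝ] Euc3Prod) = A
    rw [f₂_one]
    show prodIso (matIso U) (matIso V) * 1 = A
    rw [mul_one, hU, hV, hfg]
  · obtain ⟨U, hU⟩ := matIso_surjective f
    obtain ⟨V, hV⟩ := matIso_surjective g
    refine ⟨⟨(U, V), Multiplicative.ofAdd 1⟩, ?_⟩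
    apply Subtype.ext
    show ((f₁ ((U, V) : O3 × O3) : sphereProdSymmetries) : Euc3Prod ≃ₗᵢ[ℝ] Euc3Prod)
        * ((f₂ (Multiplicative.ofAdd 1) : sphereProdSymmetries) : Euc3Prod ≃ₗᵢ[ℝ] Euc3Prod) = A
    rw [f₂_gen]
    show prodIso (matIso U) (matIso V) * swapIso = A
    rw [hU, hV, hfg]


/-- The group of linear isometries of `ℝ³ × ℝ³` preserving `S² × S²` is isomorphic to
the semidirect product `(O(3) × O(3)) ⋊ ℤ/2`, where the nontrivial element of `ℤ/2`
acts on `O(3) × O(3)` by exchanging the two factors. -/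
theorem sphereProdSymmetries_iso_orthogonal_semidirect :
    ∃ φ : Multiplicative (ZMod 2) →* MulAut (O3 × O3),
      (∀ p : O3 × O3, φ (Multiplicative.ofAdd (1 : ZMod 2)) p = (p.2, p.1)) ∧
      Nonempty (sphereProdSymmetries ≃* (O3 × O3) ⋊[φ] Multiplicative (ZMod 2)) := by
  exact ⟨φ, φ_one, ⟨(MulEquiv.ofBijective Ψ ⟨Ψ_injective, Ψ_surjective⟩).symm⟩⟩
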